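/- Let u : [0,∞) → (0,∞) be continuous with lim_{r→∞} log u(r)/log r = ∞. If u satisfies inf_{r≥0} u(r) = 1 and limsup_{r→∞} (log u(r))/r < ∞, then the sequence α_u(n) = 1/(n! ℓ_u(n)) satisfies: α_u(0) = 1 and inf_{n≥0} α_u(n) σ^n > 0 for some σ ≥ 1. -/

import Mathlib

noncomputable def ell (u : ℝ → ℝ) (t : ℝ) : ℝ :=
  ⨅ r : {r : ℝ // 0 < r}, u r / (r : ℝ) ^ t

/-!
Since `u ≥ 1`, `ℓ_u(0) = inf_{r > 0} u(r)` is squeezed between `1` and `u(0)` (the latter by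
continuity at `0`), so it equals `inf u = 1`. Superpolynomial growth gives `u(r) ≥ r^n` for
`r ≥ S`, hence `ℓ_u(n) ≥ S^{-n} > 0`. Conversely `u(r) ≤ e^{Cr}` for `r ≥ R`, and evaluating
the infimum at `r = n + R`, where `n! ≤ r^n`, gives `n! ℓ_u(n) ≤ e^{C(n+R)}`; so
`α_u(n) (max 1 e^C)^n ≥ e^{-CR}`.
-/

open Real Set Filter

section Ell

variable {u : ℝ → ℝ}

lemma bddBelow_range_div_rpow (hu : ∀ r > 0, 0 ≤ u r) (t : ℝ) :
    BddBelow (range fun r : {r : ℝ // 0 < r} => u r / (r : ℝ) ^ t) :=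
  ⟨0, by
    rintro _ ⟨r, rfl⟩
    exact div_nonneg (hu r r.2) (rpow_pos_of_pos r.2 t).le⟩

lemma ell_le_div_rpow (hu : ∀ r > 0, 0 ≤ u r) (t : ℝ) {r : ℝ} (hr : 0 < r) :
    ell u t ≤ u r / r ^ t :=
  ciInf_le (bddBelow_range_div_rpow hu t) ⟨r, hr⟩

lemma le_ell {c t : ℝ} (h : ∀ r > 0, c ≤ u r / r ^ t) : c ≤ ell u t :=
  le_ciInf fun r => h r r.2

lemma ell_nonneg (hu : ∀ r > 0, 0 ≤ u r) (t : ℝ) : 0 ≤ ell u t :=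
  le_ell fun r hr => div_nonneg (hu r hr) (rpow_pos_of_pos hr t).le

lemma ell_zero_of_isGLB {m : ℝ} (hglb : IsGLB (u '' Ici 0) m)
    (hcont : ContinuousWithinAt u (Ici 0) 0) : ell u 0 = m := by
  have hm : ∀ r ≥ 0, m ≤ u r := fun r hr => hglb.1 ⟨r, hr, rfl⟩
  have hell : ∀ r > 0, ell u 0 ≤ u r := fun r hr => by
    simpa [ell] using ciInf_le (f := fun r : {r : ℝ // 0 < r} => u r / (r : ℝ) ^ (0 : ℝ))
      ⟨m, by rintro _ ⟨r, rfl⟩; simpa using hm r r.2.le⟩ ⟨r, hr⟩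
  refine le_antisymm (hglb.2 ?_) (le_ell fun r hr => by simpa using hm r hr.le)
  rintro _ ⟨r, hr, rfl⟩
  rcases (mem_Ici.mp hr).eq_or_lt with rfl | hr
  · have htend : Tendsto u (nhdsWithin 0 (Ioi 0)) (nhds (u 0)) :=
      hcont.tendsto.mono_left (nhdsWithin_mono _ Ioi_subset_Ici_self)
    exact ge_of_tendsto htend (eventually_nhdsWithin_of_forall hell)
  · exact hell r hr

lemma ell_pos_of_tendsto_log_div_log (hu : ∀ r > 0, 1 ≤ u r)
    (hlim : Tendsto (fun r => log (u r) / log r) atTop atTop) {t : ℝ} (ht : 0 ≤ t) :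
    0 < ell u t := by
  obtain ⟨S₀, hS₀⟩ := eventually_atTop.mp (hlim.eventually_ge_atTop t)
  set S := max S₀ 2
  have hS : 1 < S := one_lt_two.trans_le (le_max_right _ _)
  refine (rpow_pos_of_pos (one_pos.trans hS) (-t)).trans_le (le_ell fun r hr => ?_)
  have hur : 0 < u r := one_pos.trans_le (hu r hr)
  have hrt : 0 < r ^ t := rpow_pos_of_pos hr t
  rcases le_or_gt S r with hSr | hrS
  · have hlog : 0 < log r := log_pos (hS.trans_le hSr)
    have hgrowth : r ^ t ≤ u r := (rpow_le_iff_le_log hr hur).2 <|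
      by simpa [le_div_iff₀ hlog] using hS₀ r ((le_max_left _ _).trans hSr)
    calc S ^ (-t) ≤ 1 := rpow_le_one_of_one_le_of_nonpos hS.le (neg_nonpos.mpr ht)
      _ ≤ u r / r ^ t := (one_le_div hrt).2 hgrowth
  · calc S ^ (-t) = 1 / S ^ t := by rw [rpow_neg (by linarith), one_div]
      _ ≤ 1 / r ^ t := one_div_le_one_div_of_le hrt (rpow_le_rpow hr.le hrS.le ht)
      _ ≤ u r / r ^ t := div_le_div_of_nonneg_right (hu r hr) hrt.le

lemma factorial_mul_ell_le (hu : ∀ r > 0, 0 ≤ u r) {C R : ℝ} (hR : 0 < R)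
    (hbound : ∀ r ≥ R, u r ≤ exp (C * r)) (n : ℕ) :
    n.factorial * ell u n ≤ exp (C * (n + R)) := by
  set r : ℝ := n + R
  have hr : 0 < r := by positivity
  have hrn : 0 < r ^ n := pow_pos hr n
  have hfact : (n.factorial : ℝ) ≤ r ^ n :=
    calc (n.factorial : ℝ) ≤ (n : ℝ) ^ n := by exact_mod_cast Nat.factorial_le_pow n
      _ ≤ r ^ n := pow_le_pow_left₀ n.cast_nonneg (by linarith) n
  have hell : ell u n ≤ exp (C * r) / r ^ n := by
    have := ell_le_div_rpow hu n hr
    rw [rpow_natCast] at this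
    exact this.trans (div_le_div_of_nonneg_right (hbound r (by simp [r])) hrn.le)
  calc (n.factorial : ℝ) * ell u n ≤ r ^ n * (exp (C * r) / r ^ n) :=
        mul_le_mul hfact hell (ell_nonneg hu n) hrn.le
    _ = exp (C * r) := by field_simp

end Ell

lemma exists_forall_le_exp_mul_of_log_div_le {u : ℝ → ℝ} (hu : ∀ r > 0, 0 < u r)
    (h : ∃ C : ℝ, ∀ᶠ r in atTop, log (u r) / r ≤ C) :
    ∃ C R : ℝ, 0 < R ∧ ∀ r ≥ R, u r ≤ exp (C * r) := by
  obtain ⟨C, hC⟩ := h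
  obtain ⟨R₀, hR₀⟩ := eventually_atTop.mp hC
  refine ⟨C, max R₀ 1, by positivity, fun r hr => ?_⟩
  have hr₀ : 0 < r := one_pos.trans_le ((le_max_right _ _).trans hr)
  rw [← log_le_iff_le_exp (hu r hr₀), ← div_le_iff₀ hr₀]
  exact hR₀ r ((le_max_left _ _).trans hr)

lemma exists_le_one_div_mul_pow_of_le_exp {a : ℕ → ℝ} {C D : ℝ} (ha : ∀ n, 0 < a n)
    (hle : ∀ n, a n ≤ exp (C * n + D)) :
    ∃ σ ≥ (1 : ℝ), ∃ ε > (0 : ℝ), ∀ n : ℕ, ε ≤ 1 / a n * σ ^ n := by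
  refine ⟨max 1 (exp C), le_max_left _ _, exp (-D), exp_pos _, fun n => ?_⟩
  have hσ : exp (C * n) ≤ max 1 (exp C) ^ n := by
    rw [mul_comm, exp_nat_mul]
    exact pow_le_pow_left₀ (exp_pos C).le (le_max_right _ _) n
  rw [one_div, inv_mul_eq_div, le_div_iff₀ (ha n)]
  calc exp (-D) * a n ≤ exp (-D) * exp (C * n + D) :=
        mul_le_mul_of_nonneg_left (hle n) (exp_pos _).le
    _ = exp (C * n) := by rw [← exp_add]; ring_nf
    _ ≤ _ := hσ

theorem alpha_u_satisfies_A1_general (u : ℝ → ℝ)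
    (hcont : ContinuousOn u (Set.Ici 0))
    (hlim : Filter.Tendsto (fun r => Real.log (u r) / Real.log r)
      Filter.atTop Filter.atTop)
    (hU0 : IsGLB (u '' Set.Ici 0) 1)
    (hU2 : ∃ C : ℝ, ∀ᶠ r in Filter.atTop, Real.log (u r) / r ≤ C) :
    (1 / ((Nat.factorial 0 : ℝ) * ell u 0) = 1) ∧
    ∃ σ ≥ (1 : ℝ), ∃ ε > (0 : ℝ), ∀ n : ℕ,
      ε ≤ 1 / ((n.factorial : ℝ) * ell u n) * σ ^ n := by
  have hu : ∀ r > 0, 1 ≤ u r := fun r hr => hU0.1 ⟨r, hr.le, rfl⟩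
  have hu₀ : ∀ r > 0, 0 ≤ u r := fun r hr => zero_le_one.trans (hu r hr)
  refine ⟨by simp [ell_zero_of_isGLB hU0 (hcont 0 self_mem_Ici)], ?_⟩
  obtain ⟨C, R, hR, hbound⟩ := exists_forall_le_exp_mul_of_log_div_le
    (fun r hr => one_pos.trans_le (hu r hr)) hU2
  refine exists_le_one_div_mul_pow_of_le_exp (C := C) (D := C * R) (fun n => ?_) fun n => ?_
  · exact mul_pos (by exact_mod_cast n.factorial_pos)
      (ell_pos_of_tendsto_log_div_log hu hlim n.cast_nonneg)
  · exact (factorial_mul_ell_le hu₀ hR hbound n).trans_eq (by ring_nf)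

theorem alpha_u_satisfies_A1 (u : ℝ → ℝ)
    (hpos : ∀ r ≥ 0, 0 < u r)
    (hcont : ContinuousOn u (Set.Ici 0))
    (hlim : Filter.Tendsto (fun r => Real.log (u r) / Real.log r)
      Filter.atTop Filter.atTop)
    (hU0 : IsGLB (u '' Set.Ici 0) 1)
    (hU2 : ∃ C : ℝ, ∀ᶠ r in Filter.atTop, Real.log (u r) / r ≤ C) :
    (1 / ((Nat.factorial 0 : ℝ) * ell u 0) = 1) ∧
    ∃ σ ≥ (1 : ℝ), ∃ ε > (0 : ℝ), ∀ n : ℕ,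
      ε ≤ 1 / ((n.factorial : ℝ) * ell u n) * σ ^ n :=
  alpha_u_satisfies_A1_general u hcont hlim hU0 hU2
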